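/- arXiv:2605.23383 — 4 statements merged into one kernel-verified Lean document; each statement's English description precedes it below -/
import Mathlib

section
/- For complex numbers θ with sin θ ≠ 0, set C = csc θ, Z_l = e^{2ilθ}, W_l = (Z_l - 1)C, and K_{r,s} = W_r W_s + 4(Z_r + Z_s) for integers r, s. Then K_{r,s} = 0 if and only if cos(rθ)·cos(sθ) = cos((r-s)θ)·cos(2θ). -/
/-! Factor out `e^{i(a+b)}` using `e^{2ia} - 1 = 2i e^{ia} sin a` and
`e^{2ia} + e^{2ib} = 2 e^{i(a+b)} cos(a-b)`: with `a = rθ`, `b = sθ` this gives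
`K_{r,s} sin² θ = 4 e^{i(a+b)} (2 cos(a-b) sin² θ - sin a sin b)`. Then `2 sin² θ = 1 - cos 2θ` and
`cos(a-b) = cos a cos b + sin a sin b` turn the bracket into `cos a cos b - cos(a-b) cos 2θ`.
The identity holds for arbitrary complex `a`, `b`. -/

open Complex

theorem exp_two_mul_I_mul_sub_one (x : ℂ) :
    exp (2 * I * x) - 1 = 2 * I * exp (I * x) * sin x := by
  have hsq : exp (2 * I * x) = exp (I * x) * exp (I * x) := by rw [← exp_add]; ring_nf
  have hinv : exp (I * x) * exp (-(I * x)) = 1 := by rw [← exp_add, add_neg_cancel, exp_zero]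
  rw [sin, hsq, neg_mul, mul_comm x I]
  linear_combination (-(exp (I * x) * (exp (-(I * x)) - exp (I * x)))) * I_sq + hinv

theorem exp_two_mul_I_mul_add_exp_two_mul_I_mul (x y : ℂ) :
    exp (2 * I * x) + exp (2 * I * y) = 2 * exp (I * (x + y)) * cos (x - y) := by
  have hx : exp (2 * I * x) = exp (I * (x + y)) * exp ((x - y) * I) := by
    rw [← exp_add]; ring_nf
  have hy : exp (2 * I * y) = exp (I * (x + y)) * exp (-(x - y) * I) := by
    rw [← exp_add]; ring_nf
  rw [cos, hx, hy]; ring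

theorem exp_sub_one_mul_exp_sub_one_add_mul_sin_sq (a b θ : ℂ) :
    (exp (2 * I * a) - 1) * (exp (2 * I * b) - 1)
        + 4 * (exp (2 * I * a) + exp (2 * I * b)) * sin θ ^ 2 =
      4 * exp (I * (a + b)) * (cos a * cos b - cos (a - b) * cos (2 * θ)) := by
  have h2 : 2 * sin θ ^ 2 = 1 - cos (2 * θ) := by rw [cos_two_mul, cos_sq']; ring
  rw [exp_two_mul_I_mul_sub_one, exp_two_mul_I_mul_sub_one,
    exp_two_mul_I_mul_add_exp_two_mul_I_mul, mul_add, exp_add, cos_sub]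
  linear_combination
    4 * exp (I * a) * exp (I * b) * ((cos a * cos b + sin a * sin b) * h2 + sin a * sin b * I_sq)

theorem exp_sub_one_mul_csc_sq_add_eq_zero_iff {θ : ℂ} (hθ : sin θ ≠ 0) (a b : ℂ) :
    ((exp (2 * I * a) - 1) * (sin θ)⁻¹) * ((exp (2 * I * b) - 1) * (sin θ)⁻¹)
        + 4 * (exp (2 * I * a) + exp (2 * I * b)) = 0 ↔
      cos a * cos b = cos (a - b) * cos (2 * θ) := by
  have hK : (((exp (2 * I * a) - 1) * (sin θ)⁻¹) * ((exp (2 * I * b) - 1) * (sin θ)⁻¹)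
      + 4 * (exp (2 * I * a) + exp (2 * I * b))) * sin θ ^ 2 =
      4 * exp (I * (a + b)) * (cos a * cos b - cos (a - b) * cos (2 * θ)) := by
    rw [← exp_sub_one_mul_exp_sub_one_add_mul_sin_sq]
    field_simp
  rw [← mul_eq_zero_iff_right (pow_ne_zero 2 hθ), hK,
    mul_eq_zero_iff_left (mul_ne_zero (by norm_num) (exp_ne_zero _)), sub_eq_zero]

open Complex in
/-- With `C = csc θ`, `Z_l = e^{2ilθ}`, `W_l = (Z_l - 1)C`,
`K_{r,s} = W_r W_s + 4(Z_r + Z_s) = 0 ↔ cos(rθ)cos(sθ) = cos((r-s)θ)cos(2θ)`. -/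
theorem stmt6 (θ : ℂ) (hθ : Complex.sin θ ≠ 0) (r s : ℤ) :
    ((Complex.exp (2 * I * r * θ) - 1) * (Complex.sin θ)⁻¹) *
          ((Complex.exp (2 * I * s * θ) - 1) * (Complex.sin θ)⁻¹) +
        4 * (Complex.exp (2 * I * r * θ) + Complex.exp (2 * I * s * θ)) = 0 ↔
      Complex.cos (r * θ) * Complex.cos (s * θ) =
        Complex.cos ((r - s) * θ) * Complex.cos (2 * θ) := by
  simpa only [mul_assoc, ← sub_mul] using
    exp_sub_one_mul_csc_sq_add_eq_zero_iff hθ (r * θ) (s * θ)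
end

section
/- Let k be a rational number. The product 16·G_{12}·G_{21}, where G_{12} = √π · Γ((1+k)/6) / (4 Γ((2+k)/12) Γ((6+k)/12)) and G_{21} = √π · Γ((5-k)/6) / (2 Γ((6-k)/12) Γ((10-k)/12)), equals (1 + 2 sin θ)/(2 sin θ) = C/2 + 1, where θ = (1+k)π/6 and C = csc θ, provided all Gamma factors are defined and sin θ ≠ 0. -/
open Real

/-
The three pairs of Gamma factors have arguments summing to one, so by the reflection formula
`16 G₁₂ G₂₁` collapses to `2 sin A sin B / sin θ` with `A = θ/2 + π/12`, `B = θ/2 + 5π/12`.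
Product-to-sum turns `2 sin A sin B` into `cos (π/3) - cos (θ + π/2) = 1/2 + sin θ`.
-/

theorem Real.Gamma_mul_Gamma_of_add_eq_one {s t : ℝ} (h : s + t = 1) :
    Gamma s * Gamma t = π / sin (π * s) := by
  rw [← Gamma_mul_Gamma_one_sub, ← h, add_sub_cancel_left]

theorem Real.two_mul_sin_mul_sin_eq_half_add_sin (θ : ℝ) :
    2 * sin (θ / 2 + π / 12) * sin (θ / 2 + 5 * π / 12) = 1 / 2 + sin θ := by
  rw [two_mul_sin_mul_sin, show θ / 2 + π / 12 - (θ / 2 + 5 * π / 12) = -(π / 3) by ring,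
    show θ / 2 + π / 12 + (θ / 2 + 5 * π / 12) = θ + π / 2 by ring,
    cos_neg, cos_pi_div_three, cos_add_pi_div_two, sub_neg_eq_add]

noncomputable def G12 (x : ℝ) : ℝ :=
  √π * Gamma ((1 + x) / 6) / (4 * Gamma ((2 + x) / 12) * Gamma ((6 + x) / 12))

noncomputable def G21 (x : ℝ) : ℝ :=
  √π * Gamma ((5 - x) / 6) / (2 * Gamma ((6 - x) / 12) * Gamma ((10 - x) / 12))

theorem sixteen_mul_G12_mul_G21 (x : ℝ) :
    16 * G12 x * G21 x = (1 + 2 * sin ((1 + x) * π / 6)) / (2 * sin ((1 + x) * π / 6)) := by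
  set θ := (1 + x) * π / 6
  have hA := Gamma_mul_Gamma_of_add_eq_one (s := (2 + x) / 12) (t := (10 - x) / 12) (by ring)
  have hB := Gamma_mul_Gamma_of_add_eq_one (s := (6 + x) / 12) (t := (6 - x) / 12) (by ring)
  have hθ := Gamma_mul_Gamma_of_add_eq_one (s := (1 + x) / 6) (t := (5 - x) / 6) (by ring)
  rw [show π * ((2 + x) / 12) = θ / 2 + π / 12 by ring] at hA
  rw [show π * ((6 + x) / 12) = θ / 2 + 5 * π / 12 by ring] at hB
  rw [show π * ((1 + x) / 6) = θ by ring] at hθ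
  calc 16 * G12 x * G21 x
      = 2 * √π ^ 2 * (Gamma ((1 + x) / 6) * Gamma ((5 - x) / 6)) /
          ((Gamma ((2 + x) / 12) * Gamma ((10 - x) / 12)) *
            (Gamma ((6 + x) / 12) * Gamma ((6 - x) / 12))) := by
        unfold G12 G21; ring
    _ = 2 * π * (π / sin θ) / ((π / sin (θ / 2 + π / 12)) * (π / sin (θ / 2 + 5 * π / 12))) := by
        rw [sq_sqrt pi_pos.le, hA, hB, hθ]
    _ = 2 * sin (θ / 2 + π / 12) * sin (θ / 2 + 5 * π / 12) / sin θ := by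
        field_simp
    _ = (1 + 2 * sin θ) / (2 * sin θ) := by
        rw [two_mul_sin_mul_sin_eq_half_add_sin]; ring

theorem stmt9_general (k : ℚ) (hsin : Real.sin ((1 + (k : ℝ)) * π / 6) ≠ 0) :
    16 * (Real.sqrt π * Real.Gamma ((1 + (k : ℝ)) / 6) /
        (4 * Real.Gamma ((2 + (k : ℝ)) / 12) * Real.Gamma ((6 + (k : ℝ)) / 12))) *
      (Real.sqrt π * Real.Gamma ((5 - (k : ℝ)) / 6) /
        (2 * Real.Gamma ((6 - (k : ℝ)) / 12) * Real.Gamma ((10 - (k : ℝ)) / 12))) =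
      (1 + 2 * Real.sin ((1 + (k : ℝ)) * π / 6)) / (2 * Real.sin ((1 + (k : ℝ)) * π / 6)) ∧
    (1 + 2 * Real.sin ((1 + (k : ℝ)) * π / 6)) / (2 * Real.sin ((1 + (k : ℝ)) * π / 6)) =
      (Real.sin ((1 + (k : ℝ)) * π / 6))⁻¹ / 2 + 1 :=
  ⟨sixteen_mul_G12_mul_G21 k, by field_simp⟩

open Real in
/-- With `θ = (1+k)π/6`, `G12 = √π Γ((1+k)/6)/(4 Γ((2+k)/12) Γ((6+k)/12))` and
`G21 = √π Γ((5-k)/6)/(2 Γ((6-k)/12) Γ((10-k)/12))`, one has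
`16 G12 G21 = (1 + 2 sin θ)/(2 sin θ) = C/2 + 1` where `C = csc θ`. -/
theorem stmt9 (k : ℚ) (hsin : Real.sin ((1 + (k : ℝ)) * π / 6) ≠ 0)
    (h1 : Real.Gamma ((2 + (k : ℝ)) / 12) ≠ 0) (h2 : Real.Gamma ((6 + (k : ℝ)) / 12) ≠ 0)
    (h3 : Real.Gamma ((6 - (k : ℝ)) / 12) ≠ 0) (h4 : Real.Gamma ((10 - (k : ℝ)) / 12) ≠ 0) :
    16 * (Real.sqrt π * Real.Gamma ((1 + (k : ℝ)) / 6) /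
        (4 * Real.Gamma ((2 + (k : ℝ)) / 12) * Real.Gamma ((6 + (k : ℝ)) / 12))) *
      (Real.sqrt π * Real.Gamma ((5 - (k : ℝ)) / 6) /
        (2 * Real.Gamma ((6 - (k : ℝ)) / 12) * Real.Gamma ((10 - (k : ℝ)) / 12))) =
      (1 + 2 * Real.sin ((1 + (k : ℝ)) * π / 6)) / (2 * Real.sin ((1 + (k : ℝ)) * π / 6)) ∧
    (1 + 2 * Real.sin ((1 + (k : ℝ)) * π / 6)) / (2 * Real.sin ((1 + (k : ℝ)) * π / 6)) =
      (Real.sin ((1 + (k : ℝ)) * π / 6))⁻¹ / 2 + 1 :=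
  stmt9_general k hsin
end

section
/- Let Q ≥ 8 be a natural number with Q ≡ 0 (mod 4), written as Q = 2^k · m with m odd and k ≥ 2. Then the number of pairs (x, y) in (Z/QZ)^2 with x·y = 2 is 2^k · φ(m), and every such pair has exactly one of x, y odd. -/
/-! Reducing `x * y = 2` modulo `4` shows that exactly one of `x`, `y` is odd. An odd factor of
`2` is a unit, since its gcd with `n` divides `2`, and even elements are never units when `2 ∣ n`.
So the solutions are `(u, 2 u⁻¹)` and `(2 u⁻¹, u)` for units `u`, giving `2 φ(2^k m) = 2^k φ(m)`
of them. -/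

theorem Nat.card_mul_eq_of_xor_isUnit {M : Type*} [CommMonoid M] [Finite M] {a : M}
    (ha : ∀ x y : M, x * y = a → Xor (IsUnit x) (IsUnit y)) :
    Nat.card {p : M × M // p.1 * p.2 = a} = 2 * Nat.card Mˣ := by
  let f : Mˣ ⊕ Mˣ → {p : M × M // p.1 * p.2 = a}
    | .inl u => ⟨(u, ↑u⁻¹ * a), u.mul_inv_cancel_left a⟩
    | .inr u => ⟨(↑u⁻¹ * a, u), (mul_comm _ _).trans (u.mul_inv_cancel_left a)⟩
  have not_both (u v : Mˣ) : (u * v : M) ≠ a := fun h => by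
    rcases ha _ _ h with ⟨-, h'⟩ | ⟨-, h'⟩ <;> exact h' (Units.isUnit _)
  have hf : Function.Bijective f := by
    constructor
    · rintro (u | u) (v | v) huv <;> simp only [f, Subtype.mk.injEq, Prod.mk.injEq] at huv
      · exact congrArg Sum.inl (Units.ext huv.1)
      · exact (not_both u v (by rw [← huv.2]; exact u.mul_inv_cancel_left a)).elim
      · exact (not_both v u (by rw [huv.2]; exact v.mul_inv_cancel_left a)).elim
      · exact congrArg Sum.inr (Units.ext huv.2)
    · rintro ⟨⟨x, y⟩, hxy⟩
      rcases ha x y hxy with ⟨hx, -⟩ | ⟨hy, -⟩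
      · refine ⟨.inl hx.unit, ?_⟩
        simp [f, ← hxy, ← mul_assoc]
      · refine ⟨.inr hy.unit, ?_⟩
        simp [f, ← hxy, mul_left_comm _ x]
  rw [← Nat.card_eq_of_bijective f hf, Nat.card_sum, two_mul]

namespace ZMod

variable {n : ℕ}

theorem odd_val_castHom_iff [NeZero n] {d : ℕ} (h : d ∣ n) (hd : 2 ∣ d) (x : ZMod n) :
    Odd (castHom h (ZMod d) x).val ↔ Odd x.val := by
  rw [castHom_apply, cast_eq_val, val_natCast, Nat.odd_iff, Nat.odd_iff, Nat.mod_mod_of_dvd _ hd]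

theorem xor_odd_val_of_mul_eq_two [NeZero n] (hn : 4 ∣ n) {x y : ZMod n} (h : x * y = 2) :
    Xor (Odd x.val) (Odd y.val) := by
  have h4 : castHom hn (ZMod 4) x * castHom hn (ZMod 4) y = 2 := by
    rw [← map_mul, h, map_ofNat]
  rw [← odd_val_castHom_iff hn (by norm_num), ← odd_val_castHom_iff hn (by norm_num)]
  generalize castHom hn (ZMod 4) x = a, castHom hn (ZMod 4) y = b at h4
  revert a b
  decide

theorem odd_val_of_isUnit (hn : 2 ∣ n) {x : ZMod n} (hx : IsUnit x) : Odd x.val :=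
  (Nat.Coprime.coprime_dvd_right hn (val_coe_unit_coprime hx.unit)).odd_of_right

theorem isUnit_of_mul_eq_two [NeZero n] {x y : ZMod n} (h : x * y = 2) (hx : Odd x.val) :
    IsUnit x := by
  set g := x.val.gcd n
  have hg2 : g ∣ 2 := by
    -- `g ∣ x.val`, so `x` becomes `0` in `ZMod g`, and so does `2 = x * y`
    have := congrArg (castHom (Nat.gcd_dvd_right x.val n) (ZMod g)) h
    rw [map_mul, castHom_apply, cast_eq_val, (natCast_eq_zero_iff _ _).2 (Nat.gcd_dvd_left _ _),
      zero_mul, map_ofNat] at this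
    exact (natCast_eq_zero_iff 2 g).1 (by exact_mod_cast this.symm)
  have hg1 : g = 1 := by
    rcases (Nat.dvd_prime Nat.prime_two).1 hg2 with hg | hg
    · exact hg
    · exact absurd (hg ▸ Nat.gcd_dvd_left x.val n) hx.not_two_dvd_nat
  simpa using (isUnit_iff_coprime x.val n).2 hg1

theorem isUnit_iff_odd_val_of_mul_eq_two [NeZero n] (hn : 2 ∣ n) {x y : ZMod n}
    (h : x * y = 2) : IsUnit x ↔ Odd x.val :=
  ⟨odd_val_of_isUnit hn, isUnit_of_mul_eq_two h⟩

theorem xor_isUnit_of_mul_eq_two [NeZero n] (hn : 4 ∣ n) {x y : ZMod n} (h : x * y = 2) :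
    Xor (IsUnit x) (IsUnit y) := by
  have hn2 : 2 ∣ n := dvd_trans (by norm_num) hn
  rw [isUnit_iff_odd_val_of_mul_eq_two hn2 h,
    isUnit_iff_odd_val_of_mul_eq_two hn2 ((mul_comm y x).trans h)]
  exact xor_odd_val_of_mul_eq_two hn h

open Nat in
theorem card_mul_eq_two [NeZero n] (hn : 4 ∣ n) :
    Nat.card {p : ZMod n × ZMod n // p.1 * p.2 = 2} = 2 * φ n := by
  rw [Nat.card_mul_eq_of_xor_isUnit fun _ _ => xor_isUnit_of_mul_eq_two hn,
    Nat.card_eq_fintype_card, card_units_eq_totient]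

end ZMod

open Nat in
theorem Nat.two_mul_totient_two_pow_mul {k m : ℕ} (hk : k ≠ 0) (hm : Odd m) :
    2 * φ (2 ^ k * m) = 2 ^ k * φ m := by
  rw [totient_mul (Coprime.pow_left k hm.coprime_two_left),
    totient_prime_pow prime_two (pos_of_ne_zero hk), ← mul_assoc, ← mul_assoc, ← pow_succ',
    Nat.succ_eq_add_one, Nat.sub_one_add_one hk, Nat.add_one_sub_one, mul_one]

theorem stmt10_general (Q k m : ℕ) (hk : 2 ≤ k) (hm : Odd m)
    (hQ : Q = 2 ^ k * m) :
    Nat.card {p : ZMod Q × ZMod Q // p.1 * p.2 = 2} = 2 ^ k * Nat.totient m ∧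
      ∀ x y : ZMod Q, x * y = 2 → Xor' (Odd x.val) (Odd y.val) := by
  subst hQ
  have : NeZero (2 ^ k * m) := ⟨mul_ne_zero (by positivity) hm.pos.ne'⟩
  have h4 : 4 ∣ 2 ^ k * m := (pow_dvd_pow 2 hk).mul_right m
  refine ⟨?_, fun x y h => ZMod.xor_odd_val_of_mul_eq_two h4 h⟩
  rw [ZMod.card_mul_eq_two h4, Nat.two_mul_totient_two_pow_mul (by omega) hm]

/-- For `Q = 2^k m ≥ 8` with `4 ∣ Q`, `k ≥ 2` and `m` odd, the number of pairs
`(x, y)` in `(ℤ/Q)^2` with `x y = 2` is `2^k φ(m)`, and in every such pair exactly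
one of `x, y` is odd. -/
theorem stmt10 (Q k m : ℕ) (h8 : 8 ≤ Q) (h4 : Q % 4 = 0) (hk : 2 ≤ k) (hm : Odd m)
    (hQ : Q = 2 ^ k * m) :
    Nat.card {p : ZMod Q × ZMod Q // p.1 * p.2 = 2} = 2 ^ k * Nat.totient m ∧
      ∀ x y : ZMod Q, x * y = 2 → Xor' (Odd x.val) (Odd y.val) :=
  stmt10_general Q k m hk hm hQ
end

section
/- Let N be a positive integer and Q a divisor of N. Let r, s be integers with r·s ≡ 2 (mod Q) and r odd. Then there exist integers x, y with x ≡ r (mod Q), y ≡ s (mod Q), x·y ≡ 2 (mod N), and x·y - 2 > N. -/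
/-!
An odd `r` with `r s ≡ 2 (mod Q)` is coprime to `Q`, so it lifts to a residue `x` coprime
to `N`. Inverting `x` modulo `N` gives `y` with `x y ≡ 2 (mod N)`, and cancelling `r` in
`r y ≡ r s (mod Q)` shows `y ≡ s (mod Q)`. Finally, shifting `x` and `y` by multiples of `N`
keeps every congruence and makes `x y` as large as we like.
-/

namespace Int

theorem isCoprime_of_mul_modEq {n r s c : ℤ} (h : r * s ≡ c [ZMOD n]) (hc : IsCoprime c r) :
    IsCoprime n r := by
  obtain ⟨k, hk⟩ := h.dvd
  rw [sub_eq_iff_eq_add] at hk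
  rw [hk] at hc
  exact hc.of_add_mul_left_left.of_mul_left_left

theorem ModEq.cancel_left_of_isCoprime {n c a b : ℤ} (hc : IsCoprime n c)
    (h : c * a ≡ c * b [ZMOD n]) : a ≡ b [ZMOD n] := by
  rw [modEq_iff_dvd] at h ⊢
  rw [← mul_sub] at h
  exact hc.dvd_of_dvd_mul_left h

theorem exists_mul_modEq_of_isCoprime {n x : ℤ} (h : IsCoprime n x) (c : ℤ) :
    ∃ y, x * y ≡ c [ZMOD n] := by
  obtain ⟨a, b, hab⟩ := h
  refine ⟨c * b, (modEq_iff_dvd.2 ⟨-(c * a), ?_⟩).symm⟩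
  linear_combination c * hab

theorem exists_modEq_isCoprime_of_dvd {Q N : ℕ} [NeZero N] (hdvd : Q ∣ N) {r : ℤ}
    (hr : IsCoprime (Q : ℤ) r) : ∃ x : ℤ, x ≡ r [ZMOD Q] ∧ IsCoprime (N : ℤ) x := by
  obtain ⟨v, hv⟩ := ZMod.unitsMap_surjective hdvd (ZMod.unitOfIsCoprime r hr.symm)
  refine ⟨((v : ZMod N).cast : ℤ), ?_, ?_⟩
  · rw [← ZMod.intCast_eq_intCast_iff, ZMod.intCast_cast, ← ZMod.unitsMap_val hdvd, hv]
    rfl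
  · rw [← ZMod.coe_int_isUnit_iff_isCoprime, ZMod.intCast_zmod_cast]
    exact v.isUnit

theorem exists_modEq_gt (a B : ℤ) {n : ℤ} (hn : 0 < n) :
    ∃ a', a' ≡ a [ZMOD n] ∧ B < a' := by
  refine ⟨a + n * (|B - a| + 1), modEq_iff_dvd.2 ⟨-(|B - a| + 1), by ring⟩, ?_⟩
  nlinarith [le_abs_self (B - a), abs_nonneg (B - a)]

theorem exists_modEq_mul_gt (x y B : ℤ) {n : ℤ} (hn : 0 < n) :
    ∃ x' y', x' ≡ x [ZMOD n] ∧ y' ≡ y [ZMOD n] ∧ B < x' * y' := by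
  obtain ⟨x', hx', hx'_pos⟩ := exists_modEq_gt x 0 hn
  obtain ⟨y', hy', hy'_gt⟩ := exists_modEq_gt y (max B 0) hn
  refine ⟨x', y', hx', hy', ?_⟩
  nlinarith [le_max_left B 0, le_max_right B 0]

end Int

/-- If `Q ∣ N`, `r s ≡ 2 (mod Q)` and `r` is odd, then there are integers `x ≡ r`,
`y ≡ s (mod Q)` with `x y ≡ 2 (mod N)` and `x y - 2 > N`. -/
theorem stmt14 (N Q : ℕ) (hN : 0 < N) (hdvd : Q ∣ N) (r s : ℤ)
    (h2 : r * s ≡ 2 [ZMOD (Q : ℤ)]) (hr : Odd r) :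
    ∃ x y : ℤ, x ≡ r [ZMOD (Q : ℤ)] ∧ y ≡ s [ZMOD (Q : ℤ)] ∧
      x * y ≡ 2 [ZMOD (N : ℤ)] ∧ (N : ℤ) < x * y - 2 := by
  have : NeZero N := ⟨hN.ne'⟩
  have hQr : IsCoprime (Q : ℤ) r := Int.isCoprime_of_mul_modEq h2 (Int.isCoprime_two_left.2 hr)
  have hQN : (Q : ℤ) ∣ N := Int.natCast_dvd_natCast.2 hdvd
  obtain ⟨x, hxr, hNx⟩ := Int.exists_modEq_isCoprime_of_dvd hdvd hQr
  obtain ⟨y, hxy⟩ := Int.exists_mul_modEq_of_isCoprime hNx 2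
  have hry : r * y ≡ r * s [ZMOD Q] :=
    ((hxr.symm.mul_right y).trans (hxy.of_dvd hQN)).trans h2.symm
  have hys : y ≡ s [ZMOD Q] := hry.cancel_left_of_isCoprime hQr
  obtain ⟨x', y', hx', hy', hgt⟩ := Int.exists_modEq_mul_gt x y (N + 2) (Int.natCast_pos.2 hN)
  exact ⟨x', y', (hx'.of_dvd hQN).trans hxr, (hy'.of_dvd hQN).trans hys,
    (hx'.mul hy').trans hxy, by linarith⟩
end
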